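/- arXiv:2203.15482 — 5 statements merged into one kernel-verified Lean document; each statement's English description precedes it below -/
import Mathlib

section
/- Let T be a finite tree with vertex set V and edge set E, and let K : V → Finset Q be an assignment of finite sets to vertices. Then ∑_{α∈V} |K(α)| − ∑_{(α,β)∈E} |K(α) ∩ K(β)| ≥ max_{α∈V} |K(α)|, where the sum is over undirected edges. -/
/-!
Root the tree at a vertex `r` where `|K r|` is maximal. Every other vertex `w` has a unique
parent, the neighbour one step closer to `r`, and `w ↦ {w, parent w}` is a bijection from
`V \ {r}` onto the edges. Since `|K w ∩ K (parent w)| ≤ |K w|`, the edge sum is at most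
`∑_{w ≠ r} |K w|`, which leaves `|K r|` on the left.
-/

open Finset

namespace SimpleGraph

variable {V : Type*} {G : SimpleGraph V}

theorem Reachable.exists_adj_dist_eq_add_one {r w : V} (h : G.Reachable r w) (hw : w ≠ r) :
    ∃ v, G.Adj w v ∧ G.dist r w = G.dist r v + 1 := by
  obtain ⟨p, hp⟩ := h.symm.exists_walk_length_eq_dist
  have hnil : ¬p.Nil := Walk.not_nil_of_ne hw
  refine ⟨p.snd, p.adj_snd hnil, ?_⟩
  have htail : G.dist p.snd r ≤ p.tail.length := dist_le _
  have hlen := p.length_tail_add_one hnil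
  have hstep := (p.adj_snd hnil).diff_dist_adj (u := r)
  rw [dist_comm] at htail hp
  omega

theorem IsAcyclic.eq_of_adj_of_dist_eq_add_one (hG : G.IsAcyclic) {r a b c : V}
    (hr : G.Reachable r a) (hb : G.Adj a b) (hc : G.Adj a c)
    (hdb : G.dist r a = G.dist r b + 1) (hdc : G.dist r a = G.dist r c + 1) : b = c := by
  obtain ⟨q, hq, -⟩ := hr.exists_path_of_dist
  have key : ∀ x, G.Adj a x → G.dist r a = G.dist r x + 1 → x = q.penultimate := by
    intro x hx hdx
    refine hG.eq_penultimate_of_adj_end hq hx ?_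
    by_contra hxq
    obtain ⟨p, hp, hpl⟩ := (hr.trans hx.reachable).exists_path_of_dist
    have ha : a ∈ p.support :=
      hG.mem_support_of_ne_mem_support_of_adj_of_isPath hp hq hx.symm hxq
    have hlen := congrArg Walk.length (hG.path_concat hq hp hx ha)
    have hq_le : G.dist r a ≤ q.length := dist_le q
    simp only [Walk.length_concat] at hlen
    omega
  exact (key b hb hdb).trans (key c hc hdc).symm

theorem IsTree.exists_edgeFinset_eq_image [Fintype V] [DecidableEq V] [DecidableRel G.Adj]
    (hG : G.IsTree) (r : V) :
    ∃ f : V → V, (∀ w ≠ r, G.Adj w (f w)) ∧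
      G.edgeFinset = ({r}ᶜ : Finset V).image fun w => s(w, f w) := by
  have hparent : ∀ w, ∃ v, w ≠ r → G.Adj w v ∧ G.dist r w = G.dist r v + 1 := by
    intro w
    by_cases hw : w = r
    · exact ⟨w, fun h => (h hw).elim⟩
    · obtain ⟨v, hv⟩ := (hG.connected r w).exists_adj_dist_eq_add_one hw
      exact ⟨v, fun _ => hv⟩
  choose f hf using hparent
  refine ⟨f, fun w hw => (hf w hw).1, ?_⟩
  have hfar : ∀ a b, G.Adj a b → G.dist r a = G.dist r b + 1 →
      ∃ w, w ≠ r ∧ s(w, f w) = s(a, b) := by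
    intro a b hab hd
    have ha : a ≠ r := by
      rintro rfl
      simp at hd
    refine ⟨a, ha, ?_⟩
    rw [hG.isAcyclic.eq_of_adj_of_dist_eq_add_one (hG.connected r a) (hf a ha).1 hab
      (hf a ha).2 hd]
  ext e
  induction e using Sym2.ind with
  | _ a b =>
    simp only [mem_edgeFinset, mem_edgeSet, mem_image, mem_compl, mem_singleton]
    constructor
    · intro hab
      rcases hG.dist_eq_dist_add_one_of_adj r hab with hd | hd
      · exact hfar a b hab hd
      · rw [Sym2.eq_swap]
        exact hfar b a hab.symm hd
    · rintro ⟨w, hw, he⟩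
      rw [← mem_edgeSet, ← he]
      exact (hf w hw).1

theorem IsTree.sum_edgeFinset_le_sum_compl {M : Type*} [AddCommMonoid M] [PartialOrder M]
    [IsOrderedAddMonoid M] [Fintype V] [DecidableEq V] [DecidableRel G.Adj]
    (hG : G.IsTree) (r : V) {L : Sym2 V → M} {g : V → M}
    (hL : ∀ e ∈ G.edgeFinset, 0 ≤ L e) (hLg : ∀ a b, G.Adj a b → L s(a, b) ≤ g a) :
    ∑ e ∈ G.edgeFinset, L e ≤ ∑ w ∈ ({r}ᶜ : Finset V), g w := by
  obtain ⟨f, hadj, hE⟩ := hG.exists_edgeFinset_eq_image r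
  calc ∑ e ∈ G.edgeFinset, L e
      ≤ ∑ w ∈ ({r}ᶜ : Finset V), L s(w, f w) := by
        rw [hE]
        exact sum_image_le_of_nonneg fun e he => hL e (hE ▸ he)
    _ ≤ ∑ w ∈ ({r}ᶜ : Finset V), g w :=
        sum_le_sum fun w hw => hLg w (f w) (hadj w (by simpa using hw))

end SimpleGraph

/-- for a finite tree `(V,E)` and an assignment `K` of finite subsets of `Q`
to vertices, `∑_{α∈V} |K(α)| − ∑_{αEβ∈E} |K(α) ∩ K(β)| ≥ max_{α∈V} |K(α)|`,
the edge sum being over undirected edges. -/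
theorem tree_inequality
    (V Q : Type*) [Fintype V] [Nonempty V] [DecidableEq V] [DecidableEq Q]
    (G : SimpleGraph V) [DecidableRel G.Adj] (hG : G.IsTree) (K : V → Finset Q) :
    ((Finset.univ.sup (fun α : V => (K α).card) : ℕ) : ℤ) ≤
      (∑ α : V, ((K α).card : ℤ)) -
        ∑ e ∈ G.edgeFinset,
          Sym2.lift ⟨fun a b => (((K a ∩ K b).card : ℤ)),
            by intro a b; simp [Finset.inter_comm]⟩ e := by
  obtain ⟨r, -, hr⟩ := exists_mem_eq_sup univ univ_nonempty fun α => (K α).card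
  have hedges := hG.sum_edgeFinset_le_sum_compl r (g := fun α => ((K α).card : ℤ))
    (L := Sym2.lift ⟨fun a b => (((K a ∩ K b).card : ℤ)),
      by intro a b; simp [Finset.inter_comm]⟩)
    (fun e _ => by induction e using Sym2.ind; simp)
    (fun a b _ => by simpa using card_le_card inter_subset_left)
  rw [hr, ← sum_compl_add_sum {r}, sum_singleton]
  linarith
end

section
/- An orientation-preserving homeomorphism of the closed disc which fixes at least one boundary point and has some finite iterate equal to the identity, must itself be the identity on the boundary circle. -/
/-!
On the boundary, `β` is covered by the degree-one lift `F`. The fixed boundary point gives an `x₀`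
with `F x₀ = x₀ + k` for some `k ∈ ℤ`, so the translation number of `F` is `k`. Since `βⁿ` is the
identity on the circle, `Fⁿ x - x` is an integer for every `x`; an integer displacement at a
single point determines the translation number, so `Fⁿ x = x + n k` everywhere. By monotonicity
`F` itself is then translation by `k`, which descends to the identity on the circle.
-/

/-- The point `e^{2πit}` on the boundary circle of the unit disc. -/
noncomputable def eCirc (t : ℝ) : ℂ := Complex.exp ((2 * Real.pi * t : ℝ) * Complex.I)

open Real

lemma eCirc_eq_coe_circleExp (t : ℝ) : eCirc t = Circle.exp (2 * π * t) := rfl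

lemma eCirc_mem_sphere (t : ℝ) : eCirc t ∈ Metric.sphere (0 : ℂ) 1 := (Circle.exp _).2

lemma eCirc_eq_eCirc_iff {a b : ℝ} : eCirc a = eCirc b ↔ ∃ m : ℤ, a = b + m := by
  simp only [eCirc_eq_coe_circleExp, Circle.coe_inj, Circle.exp_eq_exp]
  refine exists_congr fun m => ?_
  rw [show 2 * π * b + m * (2 * π) = 2 * π * (b + m) by ring, mul_right_inj' (by positivity)]

lemma exists_eCirc_eq {z : ℂ} (hz : z ∈ Metric.sphere (0 : ℂ) 1) : ∃ t, eCirc t = z := by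
  obtain ⟨s, hs⟩ := Circle.exp_surjective (⟨z, hz⟩ : Circle)
  refine ⟨s / (2 * π), ?_⟩
  rw [eCirc_eq_coe_circleExp, mul_div_cancel₀ _ (by positivity), hs]

namespace CircleDeg1Lift

theorem map_eq_add_int_of_forall_iterate_eq_add_int (f : CircleDeg1Lift) {n : ℕ} (hn : 0 < n)
    {x₀ : ℝ} {k : ℤ} (hx₀ : f x₀ = x₀ + k) (h : ∀ x, ∃ m : ℤ, f^[n] x = x + m) (x : ℝ) :
    f x = x + k := by
  obtain ⟨m, hm⟩ := h x
  have hτ : translationNumber (f ^ n) = m :=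
    (f ^ n).translationNumber_of_eq_add_int (by rwa [coe_pow])
  rw [translationNumber_pow, f.translationNumber_of_eq_add_int hx₀] at hτ
  exact (f.iterate_pos_eq_iff hn).1 (by rw [hm, hτ])

end CircleDeg1Lift

theorem disc_homeo_no_nontrivial_roots_of_identity_general
    (β : ℂ → ℂ) (F : ℝ → ℝ)
    (hF : StrictMono F) (hFper : ∀ t, F (t + 1) = F t + 1)
    (hlift : ∀ t, β (eCirc t) = eCirc (F t))
    (p : ℂ) (hp : p ∈ Metric.sphere (0 : ℂ) 1) (hfix : β p = p)
    (n : ℕ) (hn : 1 ≤ n) (hord : ∀ z ∈ Metric.closedBall (0 : ℂ) 1, β^[n] z = z) :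
    ∀ z ∈ Metric.sphere (0 : ℂ) 1, β z = z := by
  let f : CircleDeg1Lift := ⟨⟨F, hF.monotone⟩, hFper⟩
  have hsemiconj : Function.Semiconj eCirc F β := fun t => (hlift t).symm
  obtain ⟨t₀, rfl⟩ := exists_eCirc_eq hp
  obtain ⟨k, hk⟩ := eCirc_eq_eCirc_iff.1 ((hsemiconj t₀).trans hfix)
  have hperiodic (t : ℝ) : ∃ m : ℤ, F^[n] t = t + m := eCirc_eq_eCirc_iff.1 <|
    (hsemiconj.iterate_right n t).trans
      (hord _ (Metric.sphere_subset_closedBall (eCirc_mem_sphere t)))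
  intro z hz
  obtain ⟨t, rfl⟩ := exists_eCirc_eq hz
  rw [hlift]
  exact eCirc_eq_eCirc_iff.2 ⟨k, f.map_eq_add_int_of_forall_iterate_eq_add_int hn hk hperiodic t⟩

/-- an orientation-preserving homeomorphism `β` of the closed unit disc
(orientation-preservation of the boundary restriction being encoded by a strictly
monotone degree-one lift `F`), fixing at least one boundary point and having some
finite iterate equal to the identity, is the identity on the boundary circle. -/
theorem disc_homeo_no_nontrivial_roots_of_identity
    (β : ℂ → ℂ) (F : ℝ → ℝ)
    (hcont : ContinuousOn β (Metric.closedBall (0 : ℂ) 1))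
    (hbij : Set.BijOn β (Metric.closedBall (0 : ℂ) 1) (Metric.closedBall (0 : ℂ) 1))
    (hsph : Set.MapsTo β (Metric.sphere (0 : ℂ) 1) (Metric.sphere (0 : ℂ) 1))
    (hF : StrictMono F) (hFper : ∀ t, F (t + 1) = F t + 1)
    (hlift : ∀ t, β (eCirc t) = eCirc (F t))
    (p : ℂ) (hp : p ∈ Metric.sphere (0 : ℂ) 1) (hfix : β p = p)
    (n : ℕ) (hn : 1 ≤ n) (hord : ∀ z ∈ Metric.closedBall (0 : ℂ) 1, β^[n] z = z) :
    ∀ z ∈ Metric.sphere (0 : ℂ) 1, β z = z :=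
  disc_homeo_no_nontrivial_roots_of_identity_general β F hF hFper hlift p hp hfix n hn hord
end

section
/- Let A be an A∞-algebra over a commutative ring, B an A∞-algebra, and M an A-B bimodule. Define the triangle algebra T(M) = A ⊕ M[-1] ⊕ B with operations given by μ_A on pure A-inputs, μ_B on pure B-inputs, the bimodule operations when exactly one input is in M, and zero otherwise. Then T(M) satisfies the A∞-equations. -/
/-!  A sign-explicit, coordinate-free-on-elements model of (curved) `A∞`-algebras.
The Koszul signs of the `A∞`-equations
`∑ (-1)^{✠} μ^{k-j+1}(a_1,…,a_i, μ^j(a_{i+1},…,a_{i+j}), a_{i+j+1},…,a_k) = 0`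
are encoded by a "sign operator" `σ` (on homogeneous elements of degree `d`, `σ` is
multiplication by `(-1)^{d+1}`) applied to the inputs to the left of the inner
operation. -/

/-- The vector of inputs for the term of the `A∞`-equation in which `μ^j` is applied
to the `j` consecutive inputs starting at position `i`, the sign operator `σ` being
applied to the inputs to the left. -/
def aInfComb {V : Type*} (μ : ∀ k : ℕ, (Fin k → V) → V) (σ : V → V) {k : ℕ}
    (a : Fin k → V) (i j : ℕ) (h : i + j ≤ k) : Fin (k - j + 1) → V :=
  fun m =>
    if hm : (m : ℕ) < i then σ (a ⟨(m : ℕ), by have := m.isLt; omega⟩)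
    else if hm' : (m : ℕ) = i then
      μ j (fun r => a ⟨i + (r : ℕ), by have := r.isLt; omega⟩)
    else a ⟨(m : ℕ) + j - 1, by have := m.isLt; omega⟩

/-- The left-hand side of the `A∞`-equation with inputs `a : Fin k → V`. -/
def aInfSum {V : Type*} [AddCommGroup V] (μ : ∀ k : ℕ, (Fin k → V) → V) (σ : V → V)
    (k : ℕ) (a : Fin k → V) : V :=
  ∑ j ∈ Finset.range (k + 1), ∑ i ∈ Finset.range (k + 1),
    if h : i + j ≤ k then μ (k - j + 1) (aInfComb μ σ a i j h) else 0

/-- The `A∞`-equations for the operations `μ` with sign operator `σ`. -/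
def AInfEq {V : Type*} [AddCommGroup V] (μ : ∀ k : ℕ, (Fin k → V) → V) (σ : V → V) :
    Prop :=
  ∀ (k : ℕ) (a : Fin k → V), aInfSum μ σ k a = 0

/-- The operations of the triangle algebra `T(M) = A ⊕ M[-1] ⊕ B`: `μ_A` on pure
`A`-inputs, `μ_B` on pure `B`-inputs, the bimodule operations when exactly one input is
in `M` (with `A`-inputs before and `B`-inputs after), and zero otherwise; extended
multilinearly to the direct sum. -/
def triMu {A M B : Type*} [AddCommGroup A] [AddCommGroup M] [AddCommGroup B]
    (μA : ∀ k : ℕ, (Fin k → A) → A) (μB : ∀ k : ℕ, (Fin k → B) → B)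
    (μM : ∀ i j : ℕ, (Fin i → A) → M → (Fin j → B) → M) :
    ∀ k : ℕ, (Fin k → A × M × B) → A × M × B :=
  fun k v =>
    (μA k (fun i => (v i).1),
     ∑ p : Fin k, μM (p : ℕ) (k - 1 - (p : ℕ))
       (fun r => (v ⟨(r : ℕ), by have := r.isLt; have := p.isLt; omega⟩).1)
       ((v p).2.1)
       (fun r => (v ⟨(p : ℕ) + 1 + (r : ℕ), by have := r.isLt; have := p.isLt; omega⟩).2.2),
     μB k (fun i => (v i).2.2))

/-- The sign operator on the triangle algebra, acting componentwise. -/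
def triSigma {A M B : Type*} (σA : A → A) (σM : M → M) (σB : B → B) :
    A × M × B → A × M × B :=
  fun x => (σA x.1, σM x.2.1, σB x.2.2)

/-- The element of `T(M)` with `A`-inputs `as`, one `M`-input `m` in position `i`, and
`B`-inputs `bs`. -/
def pureInput {A M B : Type*} [AddCommGroup A] [AddCommGroup M] [AddCommGroup B]
    (i j : ℕ) (as : Fin i → A) (m : M) (bs : Fin j → B) : Fin (i + 1 + j) → A × M × B :=
  fun p =>
    if hp : (p : ℕ) < i then (as ⟨(p : ℕ), hp⟩, 0, 0)
    else if hp' : (p : ℕ) = i then (0, m, 0)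
    else (0, 0, bs ⟨(p : ℕ) - i - 1, by have := p.isLt; omega⟩)

/-! Each component of the `A∞`-sum of `T(M)` is treated separately. On the `A`- and the
`B`-component, `triMu` and `triSigma` act componentwise, so these components are the `A∞`-sums
of `A` and of `B`.

Every term of the `M`-component is a (possibly nested) bimodule operation reading exactly one
`M`-input, in some slot `s`, together with `A`-inputs coming from slots before `s` and
`B`-inputs coming from slots after `s`; it vanishes when that `M`-input is `0`, because
`σM 0 = 0` and `μM` is additive in its `M`-input. Hence the `M`-component at `a` is the sum, over
the slots `p`, of the `M`-component at the input `slotPart a p` which keeps only the `A`-parts of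
`a` before `p`, its `M`-part at `p` and its `B`-parts after `p`. That input is a pure bimodule
input, on which the bimodule equations make the `A∞`-sum vanish. -/

section AInfComb

variable {V : Type*} {μ : ∀ k : ℕ, (Fin k → V) → V} {σ : V → V} {k : ℕ} {a : Fin k → V}
  {i j : ℕ} {h : i + j ≤ k} {m : Fin (k - j + 1)}

theorem aInfComb_of_lt (hm : (m : ℕ) < i) :
    aInfComb μ σ a i j h m = σ (a ⟨m, by omega⟩) := by
  simp [aInfComb, hm]

theorem aInfComb_of_eq (hm : (m : ℕ) = i) :
    aInfComb μ σ a i j h m = μ j (fun r => a ⟨i + r, by omega⟩) := by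
  simp [aInfComb, hm]

theorem aInfComb_of_gt (hm : i < (m : ℕ)) :
    aInfComb μ σ a i j h m = a ⟨m + j - 1, by omega⟩ := by
  simp [aInfComb, hm.ne', hm.not_gt]

/-- `q` is one of the inputs feeding slot `m` of `aInfComb μ σ a i j h`. -/
def IsCombSource (i j m q : ℕ) : Prop :=
  (m < i ∧ q = m) ∨ (m = i ∧ i ≤ q ∧ q < i + j) ∨ (i < m ∧ q = m + j - 1)

theorem aInfComb_congr {b : Fin k → V} (hab : ∀ q : Fin k, IsCombSource i j m q → a q = b q) :
    aInfComb μ σ a i j h m = aInfComb μ σ b i j h m := by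
  rcases lt_trichotomy (m : ℕ) i with hm | hm | hm
  · rw [aInfComb_of_lt hm, aInfComb_of_lt hm, hab _ (Or.inl ⟨hm, rfl⟩)]
  · rw [aInfComb_of_eq hm, aInfComb_of_eq hm]
    congr 1
    funext r
    exact hab _ (Or.inr (Or.inl ⟨hm, by simp, by simp⟩))
  · rw [aInfComb_of_gt hm, aInfComb_of_gt hm, hab _ (Or.inr (Or.inr ⟨hm, rfl⟩))]

theorem aInfComb_map {W : Type*} {ν : ∀ k : ℕ, (Fin k → W) → W} {τ : W → W} (φ : V → W)
    (hμ : ∀ k v, φ (μ k v) = ν k (φ ∘ v)) (hσ : ∀ x, φ (σ x) = τ (φ x)) :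
    φ (aInfComb μ σ a i j h m) = aInfComb ν τ (φ ∘ a) i j h m := by
  unfold aInfComb
  split_ifs <;> simp only [hμ, hσ, Function.comp_def]

end AInfComb

theorem aInfSum_map {V W : Type*} [AddCommGroup V] [AddCommGroup W]
    {μ : ∀ k : ℕ, (Fin k → V) → V} {σ : V → V} {ν : ∀ k : ℕ, (Fin k → W) → W} {τ : W → W}
    (φ : V →+ W) (hμ : ∀ k v, φ (μ k v) = ν k (φ ∘ v)) (hσ : ∀ x, φ (σ x) = τ (φ x))
    {k : ℕ} (a : Fin k → V) :
    φ (aInfSum μ σ k a) = aInfSum ν τ k (φ ∘ a) := by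
  simp only [aInfSum, map_sum, apply_dite φ, map_zero, hμ]
  refine Finset.sum_congr rfl fun j _ => Finset.sum_congr rfl fun i _ => ?_
  split_ifs with h
  · exact congrArg (ν _) (funext fun m => aInfComb_map φ hμ hσ)
  · rfl

theorem aInfSum_comp_cast {V : Type*} [AddCommGroup V] (μ : ∀ k : ℕ, (Fin k → V) → V)
    (σ : V → V) {k k' : ℕ} (hk : k = k') (b : Fin k' → V) :
    aInfSum μ σ k (b ∘ Fin.cast hk) = aInfSum μ σ k' b := by
  subst hk
  rfl

section Triangle

variable {A M B : Type*}

/-- `x` and `y` agree on everything that a bimodule operation with its `M`-input in slot `s`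
reads. -/
def AgreeAround {k : ℕ} (s : Fin k) (x y : Fin k → A × M × B) : Prop :=
  (∀ q, q < s → (x q).1 = (y q).1) ∧ (x s).2.1 = (y s).2.1 ∧ ∀ q, s < q → (x q).2.2 = (y q).2.2

def IsSlotLocal [Zero M] {k : ℕ} (F : (Fin k → A × M × B) → M) (s : Fin k) : Prop :=
  (∀ x y, AgreeAround s x y → F x = F y) ∧ ∀ x, (x s).2.1 = 0 → F x = 0

theorem isSlotLocal_snd_fst [Zero M] {k : ℕ} (s : Fin k) :
    IsSlotLocal (fun x : Fin k → A × M × B => (x s).2.1) s :=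
  ⟨fun _ _ hxy => hxy.2.1, fun _ hx => hx⟩

theorem IsSlotLocal.comp_left [Zero M] {k : ℕ} {F : (Fin k → A × M × B) → M} {s : Fin k}
    (hF : IsSlotLocal F s) (φ : M → M) (hφ : φ 0 = 0) : IsSlotLocal (φ ∘ F) s :=
  ⟨fun x y hxy => congrArg φ (hF.1 x y hxy), fun x hx => by simp [hF.2 x hx, hφ]⟩

section BimoduleOperation

variable (μM : ∀ i j : ℕ, (Fin i → A) → M → (Fin j → B) → M)

def muMAt {n : ℕ} (v : Fin n → A × M × B) (p : Fin n) (m : M) : M :=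
  μM p (n - 1 - p) (fun r => (v ⟨r, by omega⟩).1) m (fun r => (v ⟨p + 1 + r, by omega⟩).2.2)

theorem muMAt_congr {n : ℕ} {v w : Fin n → A × M × B} {p : Fin n} (m : M)
    (hA : ∀ q, q < p → (v q).1 = (w q).1) (hB : ∀ q, p < q → (v q).2.2 = (w q).2.2) :
    muMAt μM v p m = muMAt μM w p m := by
  unfold muMAt
  congr 1 <;> funext r
  · exact hA _ (Fin.lt_def.mpr (by simp))
  · exact hB _ (Fin.lt_def.mpr (by simp; omega))

variable {μM} [AddCommGroup M]
  (hMadd : ∀ (i j : ℕ) (as : Fin i → A) (m m' : M) (bs : Fin j → B),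
    μM i j as (m + m') bs = μM i j as m bs + μM i j as m' bs)
include hMadd

theorem muMAt_zero {n : ℕ} (v : Fin n → A × M × B) (p : Fin n) : muMAt μM v p 0 = 0 :=
  (AddMonoidHom.mk' (muMAt μM v p) fun _ _ => hMadd _ _ _ _ _ _).map_zero

theorem muMAt_sum {n : ℕ} (v : Fin n → A × M × B) (p : Fin n) {ι : Type*} (s : Finset ι)
    (f : ι → M) : muMAt μM v p (∑ x ∈ s, f x) = ∑ x ∈ s, muMAt μM v p (f x) :=
  map_sum (AddMonoidHom.mk' (muMAt μM v p) fun _ _ => hMadd _ _ _ _ _ _) f s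

theorem isSlotLocal_muMAt {k n : ℕ} {g : (Fin k → A × M × B) → Fin n → A × M × B}
    {F : (Fin k → A × M × B) → M} {s : Fin k} (t : Fin n) (hF : IsSlotLocal F s)
    (hg : ∀ x y, AgreeAround s x y →
      (∀ q, q < t → (g x q).1 = (g y q).1) ∧ ∀ q, t < q → (g x q).2.2 = (g y q).2.2) :
    IsSlotLocal (fun x => muMAt μM (g x) t (F x)) s := by
  refine ⟨fun x y hxy => ?_, fun x hx => ?_⟩
  · change muMAt μM (g x) t (F x) = muMAt μM (g y) t (F y)
    rw [hF.1 x y hxy]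
    exact muMAt_congr μM _ (hg x y hxy).1 (hg x y hxy).2
  · change muMAt μM (g x) t (F x) = 0
    rw [hF.2 x hx]
    exact muMAt_zero hMadd (g x) t

end BimoduleOperation

variable [AddCommGroup A] [AddCommGroup M] [AddCommGroup B]

def slotPart {k : ℕ} (a : Fin k → A × M × B) (p : Fin k) : Fin k → A × M × B :=
  pureInput p (k - 1 - p) (fun r => (a ⟨r, by omega⟩).1) (a p).2.1
      (fun r => (a ⟨p + 1 + r, by omega⟩).2.2) ∘ Fin.cast (by omega)

theorem slotPart_snd_fst_of_ne {k : ℕ} (a : Fin k → A × M × B) {p q : Fin k} (hqp : q ≠ p) :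
    (slotPart a p q).2.1 = 0 := by
  have hqp' : (q : ℕ) ≠ p := Fin.val_ne_of_ne hqp
  simp only [slotPart, pureInput, Function.comp_apply, Fin.val_cast, hqp', dite_false]
  split_ifs <;> rfl

theorem agreeAround_slotPart {k : ℕ} (a : Fin k → A × M × B) (p : Fin k) :
    AgreeAround p a (slotPart a p) := by
  refine ⟨fun q hq => ?_, ?_, fun q hq => ?_⟩
  · simp [slotPart, pureInput, Fin.lt_def.mp hq]
  · simp [slotPart, pureInput]
  · have hq' := Fin.lt_def.mp hq
    simp only [slotPart, pureInput, Function.comp_apply, Fin.val_cast, hq'.not_gt, hq'.ne',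
      dite_false]
    congr 3
    ext
    simp only
    omega

def SplitsAtSlots {k : ℕ} (F : (Fin k → A × M × B) → M) : Prop :=
  ∀ a, F a = ∑ p, F (slotPart a p)

theorem IsSlotLocal.splitsAtSlots {k : ℕ} {F : (Fin k → A × M × B) → M} {s : Fin k}
    (hF : IsSlotLocal F s) : SplitsAtSlots F := fun a => by
  rw [Fintype.sum_eq_single s fun p hp => hF.2 _ (slotPart_snd_fst_of_ne a (Ne.symm hp))]
  exact hF.1 _ _ (agreeAround_slotPart a s)

theorem SplitsAtSlots.sum {k : ℕ} {ι : Type*} (t : Finset ι)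
    {F : ι → (Fin k → A × M × B) → M} (hF : ∀ x ∈ t, SplitsAtSlots (F x)) :
    SplitsAtSlots fun a => ∑ x ∈ t, F x a := fun a => by
  rw [Finset.sum_comm]
  exact Finset.sum_congr rfl fun x hx => hF x hx a

section TriangleAlgebra

variable {μA : ∀ k : ℕ, (Fin k → A) → A} {μB : ∀ k : ℕ, (Fin k → B) → B}
  {μM : ∀ i j : ℕ, (Fin i → A) → M → (Fin j → B) → M} {σA : A → A} {σM : M → M} {σB : B → B}

local notation "triComb" => aInfComb (triMu μA μB μM) (triSigma σA σM σB)

theorem triMu_snd_fst {n : ℕ} (v : Fin n → A × M × B) :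
    (triMu μA μB μM n v).2.1 = ∑ p, muMAt μM v p (v p).2.1 :=
  rfl

theorem aInfSum_triMu_fst {k : ℕ} (a : Fin k → A × M × B) :
    (aInfSum (triMu μA μB μM) (triSigma σA σM σB) k a).1 = aInfSum μA σA k (Prod.fst ∘ a) :=
  aInfSum_map (AddMonoidHom.fst A (M × B)) (fun _ _ => rfl) (fun _ => rfl) a

theorem aInfSum_triMu_snd_snd {k : ℕ} (a : Fin k → A × M × B) :
    (aInfSum (triMu μA μB μM) (triSigma σA σM σB) k a).2.2
      = aInfSum μB σB k ((Prod.snd ∘ Prod.snd) ∘ a) :=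
  aInfSum_map ((AddMonoidHom.snd M B).comp (AddMonoidHom.snd A (M × B))) (fun _ _ => rfl)
    (fun _ => rfl) a

theorem aInfComb_triMu_fst {k i j : ℕ} (x : Fin k → A × M × B) (h : i + j ≤ k)
    (m : Fin (k - j + 1)) : (triComb x i j h m).1 = aInfComb μA σA (Prod.fst ∘ x) i j h m :=
  aInfComb_map Prod.fst (fun _ _ => rfl) fun _ => rfl

theorem aInfComb_triMu_snd_snd {k i j : ℕ} (x : Fin k → A × M × B) (h : i + j ≤ k)
    (m : Fin (k - j + 1)) :
    (triComb x i j h m).2.2 = aInfComb μB σB ((Prod.snd ∘ Prod.snd) ∘ x) i j h m :=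
  aInfComb_map (Prod.snd ∘ Prod.snd) (fun _ _ => rfl) fun _ => rfl

theorem aInfComb_triMu_agree {k i j : ℕ} (h : i + j ≤ k) {s : Fin k} {t : Fin (k - j + 1)}
    (hlt : ∀ m : Fin (k - j + 1), m < t → ∀ q : Fin k, IsCombSource i j m q → q < s)
    (hgt : ∀ m : Fin (k - j + 1), t < m → ∀ q : Fin k, IsCombSource i j m q → s < q)
    (x y : Fin k → A × M × B) (hxy : AgreeAround s x y) :
    (∀ m, m < t → (triComb x i j h m).1 = (triComb y i j h m).1) ∧
      ∀ m, t < m → (triComb x i j h m).2.2 = (triComb y i j h m).2.2 := by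
  refine ⟨fun m hm => ?_, fun m hm => ?_⟩
  · rw [aInfComb_triMu_fst, aInfComb_triMu_fst]
    exact aInfComb_congr fun q hq => hxy.1 q (hlt m hm q hq)
  · rw [aInfComb_triMu_snd_snd, aInfComb_triMu_snd_snd]
    exact aInfComb_congr fun q hq => hxy.2.2 q (hgt m hm q hq)

theorem aInfSum_triMu_slotPart_snd_fst
    (hbimod : ∀ (i j : ℕ) (as : Fin i → A) (m : M) (bs : Fin j → B),
      (aInfSum (triMu μA μB μM) (triSigma σA σM σB) (i + 1 + j)
        (pureInput i j as m bs)).2.1 = 0)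
    {k : ℕ} (a : Fin k → A × M × B) (p : Fin k) :
    (aInfSum (triMu μA μB μM) (triSigma σA σM σB) k (slotPart a p)).2.1 = 0 := by
  rw [slotPart, aInfSum_comp_cast]
  exact hbimod _ _ _ _ _

variable (hMadd : ∀ (i j : ℕ) (as : Fin i → A) (m m' : M) (bs : Fin j → B),
  μM i j as (m + m') bs = μM i j as m bs + μM i j as m' bs)
include hMadd

theorem splitsAtSlots_muMAt_triComb_of_source {k i j : ℕ} (h : i + j ≤ k) (t : Fin (k - j + 1))
    (s : Fin k) (φ : M → M) (hφ : φ 0 = 0)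
    (hM : ∀ x : Fin k → A × M × B, (triComb x i j h t).2.1 = φ (x s).2.1)
    (hlt : ∀ m : Fin (k - j + 1), m < t → ∀ q : Fin k, IsCombSource i j m q → q < s)
    (hgt : ∀ m : Fin (k - j + 1), t < m → ∀ q : Fin k, IsCombSource i j m q → s < q) :
    SplitsAtSlots fun x => muMAt μM (triComb x i j h) t (triComb x i j h t).2.1 := by
  simp only [hM]
  exact (isSlotLocal_muMAt hMadd t ((isSlotLocal_snd_fst s).comp_left φ hφ)
    (aInfComb_triMu_agree h hlt hgt)).splitsAtSlots

/-- Here the `M`-input of the outer operation is itself a sum of bimodule operations, one for each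
slot of the inner block. -/
theorem splitsAtSlots_muMAt_triComb_of_eq {k i j : ℕ} (h : i + j ≤ k) (t : Fin (k - j + 1))
    (hti : (t : ℕ) = i) :
    SplitsAtSlots fun x => muMAt μM (triComb x i j h) t (triComb x i j h t).2.1 := by
  have hM : ∀ x : Fin k → A × M × B,
      muMAt μM (triComb x i j h) t (triComb x i j h t).2.1
        = ∑ r : Fin j, muMAt μM (triComb x i j h) t
            (muMAt μM (fun r' : Fin j => x ⟨i + r', by omega⟩) r (x ⟨i + r, by omega⟩).2.1) :=
    fun x => by rw [aInfComb_of_eq hti, triMu_snd_fst, muMAt_sum hMadd]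
  simp only [hM]
  refine SplitsAtSlots.sum _ fun r _ => (isSlotLocal_muMAt hMadd t
    (isSlotLocal_muMAt hMadd (g := fun x r' => x ⟨i + r', by omega⟩) r (isSlotLocal_snd_fst _)
      fun x y hxy => ⟨fun q hq => hxy.1 _ ?_, fun q hq => hxy.2.2 _ ?_⟩)
    (aInfComb_triMu_agree h ?_ ?_)).splitsAtSlots
  · simp only [Fin.lt_def] at hq ⊢
    omega
  · simp only [Fin.lt_def] at hq ⊢
    omega
  all_goals
    intro m hm q hq
    simp only [IsCombSource, Fin.lt_def] at hm hq ⊢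
    omega

theorem splitsAtSlots_muMAt_triComb (hσM0 : σM 0 = 0) {k i j : ℕ} (h : i + j ≤ k)
    (t : Fin (k - j + 1)) :
    SplitsAtSlots fun x => muMAt μM (triComb x i j h) t (triComb x i j h t).2.1 := by
  have ht := t.isLt
  rcases lt_trichotomy (t : ℕ) i with hti | hti | hti
  · refine splitsAtSlots_muMAt_triComb_of_source hMadd h t ⟨t, by omega⟩ σM hσM0
      (fun x => by rw [aInfComb_of_lt hti]; rfl) ?_ ?_ <;>
    · intro m hm q hq
      simp only [IsCombSource, Fin.lt_def] at hm hq ⊢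
      omega
  · exact splitsAtSlots_muMAt_triComb_of_eq hMadd h t hti
  · refine splitsAtSlots_muMAt_triComb_of_source hMadd h t ⟨t + j - 1, by omega⟩ id rfl
      (fun x => by rw [aInfComb_of_gt hti]; rfl) ?_ ?_ <;>
    · intro m hm q hq
      simp only [IsCombSource, Fin.lt_def] at hm hq ⊢
      omega

theorem splitsAtSlots_aInfSum_triMu_snd_fst (hσM0 : σM 0 = 0) (k : ℕ) :
    SplitsAtSlots fun a : Fin k → A × M × B =>
      (aInfSum (triMu μA μB μM) (triSigma σA σM σB) k a).2.1 := by
  simp only [aInfSum, Prod.snd_sum, Prod.fst_sum]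
  refine SplitsAtSlots.sum _ fun j _ => SplitsAtSlots.sum _ fun i _ => ?_
  by_cases h : i + j ≤ k
  · simp only [dif_pos h, triMu_snd_fst]
    exact SplitsAtSlots.sum _ fun t _ => splitsAtSlots_muMAt_triComb hMadd hσM0 h t
  · simp [dif_neg h, SplitsAtSlots]

end TriangleAlgebra

end Triangle

theorem triangle_algebra_satisfies_AInfty_equations_general
    {A M B : Type*} [AddCommGroup A] [AddCommGroup M] [AddCommGroup B]
    (μA : ∀ k : ℕ, (Fin k → A) → A) (μB : ∀ k : ℕ, (Fin k → B) → B)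
    (μM : ∀ i j : ℕ, (Fin i → A) → M → (Fin j → B) → M)
    (σA : A → A) (σM : M → M) (σB : B → B)
    (hA : AInfEq μA σA) (hB : AInfEq μB σB)
    (hσM0 : σM 0 = 0)
    (hMadd : ∀ (i j : ℕ) (as : Fin i → A) (m m' : M) (bs : Fin j → B),
      μM i j as (m + m') bs = μM i j as m bs + μM i j as m' bs)
    (hbimod : ∀ (i j : ℕ) (as : Fin i → A) (m : M) (bs : Fin j → B),
      (aInfSum (triMu μA μB μM) (triSigma σA σM σB) (i + 1 + j)
        (pureInput i j as m bs)).2.1 = 0) :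
    AInfEq (triMu μA μB μM) (triSigma σA σM σB) := by
  intro k a
  refine Prod.ext ?_ (Prod.ext ?_ ?_)
  · exact (aInfSum_triMu_fst a).trans (hA k _)
  · exact (splitsAtSlots_aInfSum_triMu_snd_fst hMadd hσM0 k a).trans
      (Finset.sum_eq_zero fun p _ => aInfSum_triMu_slotPart_snd_fst hbimod a p)
  · exact (aInfSum_triMu_snd_snd a).trans (hB k _)

/-- if `A` and `B` are `A∞`-algebras and `M` is an `A∞` `A`-`B`-bimodule
(the bimodule equations being expressed as the vanishing of the `M`-component of the
`A∞`-sum of `T(M)` on inputs with exactly one `M`-entry), then the triangle algebra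
`T(M) = A ⊕ M[-1] ⊕ B` satisfies the `A∞`-equations. -/
theorem triangle_algebra_satisfies_AInfty_equations
    {A M B : Type*} [AddCommGroup A] [AddCommGroup M] [AddCommGroup B]
    (μA : ∀ k : ℕ, (Fin k → A) → A) (μB : ∀ k : ℕ, (Fin k → B) → B)
    (μM : ∀ i j : ℕ, (Fin i → A) → M → (Fin j → B) → M)
    (σA : A → A) (σM : M → M) (σB : B → B)
    (hA : AInfEq μA σA) (hB : AInfEq μB σB)
    (hσM0 : σM 0 = 0)
    (hM0 : ∀ (i j : ℕ) (as : Fin i → A) (bs : Fin j → B), μM i j as 0 bs = 0)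
    (hMadd : ∀ (i j : ℕ) (as : Fin i → A) (m m' : M) (bs : Fin j → B),
      μM i j as (m + m') bs = μM i j as m bs + μM i j as m' bs)
    (hbimod : ∀ (i j : ℕ) (as : Fin i → A) (m : M) (bs : Fin j → B),
      (aInfSum (triMu μA μB μM) (triSigma σA σM σB) (i + 1 + j)
        (pureInput i j as m bs)).2.1 = 0) :
    AInfEq (triMu μA μB μM) (triSigma σA σM σB) :=
  triangle_algebra_satisfies_AInfty_equations_general μA μB μM σA σM σB hA hB hσM0 hMadd hbimod
end

section
/- Let A, B be A∞-algebras, M an A-B bimodule, and f ∈ M a quasi-isomorphism (a closed element such that μ^{1|1|0}(−;f;) : A → M and μ^{0|1|1}(;f;−) : B → M are quasi-isomorphisms of cochain complexes). Then the strict projections π_A : T(M)^f → A and π_B : T(M)^f → B from the deformed triangle algebra both induce isomorphisms on cohomology. -/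
/-- The differential `μ¹_f` of the deformed triangle algebra `T(M)^f`, on
`T(M) = A ⊕ M[-1] ⊕ B`: here `g = μ^{1|1|0}(−;f;)` and `h = μ^{0|1|1}(;f;−)` are the
maps obtained by inserting the Maurer–Cartan element `f`. -/
def triDiff {A M B : Type*} [AddCommGroup A] [AddCommGroup M] [AddCommGroup B]
    (dA : A →+ A) (dM : M →+ M) (dB : B →+ B) (g : A →+ M) (h : B →+ M) :
    A × M × B → A × M × B :=
  fun x => (dA x.1, g x.1 + dM x.2.1 + h x.2.2, dB x.2.2)

/-- let `A`, `B` be `A∞`-algebras, `M` an `A`-`B` bimodule, and `f ∈ M` a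
quasi-isomorphism: a closed element such that `g = μ^{1|1|0}(−;f;) : A → M` and
`h = μ^{0|1|1}(;f;−) : B → M` are quasi-isomorphisms of cochain complexes.  Then the
strict projections `π_A : T(M)^f → A` and `π_B : T(M)^f → B` from the deformed triangle
algebra both induce isomorphisms on cohomology. -/
theorem projections_from_deformed_triangle_algebra_are_quasi_isos
    {A M B : Type*} [AddCommGroup A] [AddCommGroup M] [AddCommGroup B]
    (dA : A →+ A) (dM : M →+ M) (dB : B →+ B) (g : A →+ M) (h : B →+ M)
    (hdA : ∀ a, dA (dA a) = 0) (hdM : ∀ m, dM (dM m) = 0) (hdB : ∀ b, dB (dB b) = 0)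
    (hdT : ∀ x, triDiff dA dM dB g h (triDiff dA dM dB g h x) = 0)
    (hgc : ∀ a, dA a = 0 → dM (g a) = 0)
    (hhc : ∀ b, dB b = 0 → dM (h b) = 0)
    (hgs : ∀ m, dM m = 0 → ∃ a, dA a = 0 ∧ ∃ m', m - g a = dM m')
    (hgi : ∀ a, dA a = 0 → (∃ m', g a = dM m') → ∃ a', a = dA a')
    (hhs : ∀ m, dM m = 0 → ∃ b, dB b = 0 ∧ ∃ m', m - h b = dM m')
    (hhi : ∀ b, dB b = 0 → (∃ m', h b = dM m') → ∃ b', b = dB b') :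
    ((∀ a : A, dA a = 0 →
        ∃ x, triDiff dA dM dB g h x = 0 ∧ ∃ a', a - x.1 = dA a') ∧
     (∀ x, triDiff dA dM dB g h x = 0 → (∃ a', x.1 = dA a') →
        ∃ x', x = triDiff dA dM dB g h x')) ∧
    ((∀ b : B, dB b = 0 →
        ∃ x, triDiff dA dM dB g h x = 0 ∧ ∃ b', b - x.2.2 = dB b') ∧
     (∀ x, triDiff dA dM dB g h x = 0 → (∃ b', x.2.2 = dB b') →
        ∃ x', x = triDiff dA dM dB g h x')) := by
  have hg : ∀ a : A, dM (g a) = - g (dA a) := by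
    intro a
    have H := congrArg (fun x => x.2.1) (hdT (a, 0, 0))
    simp only [triDiff, map_zero, add_zero, Prod.snd_zero, Prod.fst_zero] at H
    linear_combination (norm := abel) H
  have hh : ∀ b : B, dM (h b) = - h (dB b) := by
    intro b
    have H := congrArg (fun x => x.2.1) (hdT (0, 0, b))
    simp only [triDiff, map_zero, zero_add, Prod.snd_zero, Prod.fst_zero] at H
    linear_combination (norm := abel) H
  refine ⟨⟨?_, ?_⟩, ?_, ?_⟩
  · intro a ha
    obtain ⟨b, hb, m', hm'⟩ := hhs (-(g a)) (by rw [map_neg, hgc a ha, neg_zero])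
    refine ⟨(a, m', b), ?_, 0, by simp⟩
    show (dA a, g a + dM m' + h b, dB b) = 0
    have hmid : g a + dM m' + h b = 0 := by rw [← hm']; abel
    rw [ha, hb, hmid]; rfl
  · rintro ⟨a, m, b⟩ hx ⟨a', ha'⟩
    obtain ⟨ha, hm, hb⟩ : dA a = 0 ∧ g a + dM m + h b = 0 ∧ dB b = 0 := by
      simpa [triDiff, Prod.ext_iff] using hx
    simp only at ha'
    have hbeq : h b = dM (g a' - m) := by
      rw [map_sub, hg a', ← ha']
      linear_combination (norm := abel) hm
    obtain ⟨b'', hb''⟩ := hhi b hb ⟨g a' - m, hbeq⟩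
    have hp : dM (m - g a' - h b'') = 0 := by
      rw [map_sub, map_sub, hg, hh, ← ha', ← hb'']
      linear_combination (norm := abel) hm
    obtain ⟨a0, ha0, m'', hm''⟩ := hgs _ hp
    refine ⟨(a' + a0, m'', b''), ?_⟩
    show (a, m, b) = (dA (a' + a0), g (a' + a0) + dM m'' + h b'', dB b'')
    have h1 : dA (a' + a0) = a := by rw [map_add, ha0, add_zero, ha']
    have h2 : g (a' + a0) + dM m'' + h b'' = m := by
      rw [map_add, ← hm'']; abel
    rw [h1, h2, ← hb'']
  · intro b hb
    obtain ⟨a, ha, m', hm'⟩ := hgs (-(h b)) (by rw [map_neg, hhc b hb, neg_zero])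
    refine ⟨(a, m', b), ?_, 0, by simp⟩
    show (dA a, g a + dM m' + h b, dB b) = 0
    have hmid : g a + dM m' + h b = 0 := by rw [← hm']; abel
    rw [ha, hb, hmid]; rfl
  · rintro ⟨a, m, b⟩ hx ⟨b', hb'⟩
    obtain ⟨ha, hm, hb⟩ : dA a = 0 ∧ g a + dM m + h b = 0 ∧ dB b = 0 := by
      simpa [triDiff, Prod.ext_iff] using hx
    simp only at hb'
    have hgeq : g a = dM (h b' - m) := by
      rw [map_sub, hh b', ← hb']
      linear_combination (norm := abel) hm
    obtain ⟨a'', ha''⟩ := hgi a ha ⟨h b' - m, hgeq⟩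
    have hp : dM (m - h b' - g a'') = 0 := by
      rw [map_sub, map_sub, hg, hh, ← ha'', ← hb']
      linear_combination (norm := abel) hm
    obtain ⟨b0, hb0, m'', hm''⟩ := hhs _ hp
    refine ⟨(a'', m'', b' + b0), ?_⟩
    show (a, m, b) = (dA a'', g a'' + dM m'' + h (b' + b0), dB (b' + b0))
    have h1 : dB (b' + b0) = b := by rw [map_add, hb0, add_zero, hb']
    have h2 : g a'' + dM m'' + h (b' + b0) = m := by
      rw [map_add, ← hm'']; abel
    rw [h1, h2, ← ha'']
end

section
/- The kernel of the projection π_B : T(M)^f → B is isomorphic as a cochain complex to the mapping cone of the chain map μ^{1|1|0}(−;f;) : A → M; hence if this map is a quasi-isomorphism, the kernel is acyclic and π_B is a quasi-isomorphism. -/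
/-- The differential of the deformed triangle algebra `T(M)^f`, built (degreewise) on
`T n = A(n+1) × M n × B n` (i.e. `A ⊕ M[-1] ⊕ B`, with the `A`-summand recorded in the
shifted grading of the cone): `d(a,m,b) = (−d_A a, g(a) + d_M m + h(b), d_B b)`, where
`g = μ^{1|1|0}(−;f;)` and `h = μ^{0|1|1}(;f;−)`. -/
def triGradedDiff {A M B : ℤ → Type*}
    [∀ n, AddCommGroup (A n)] [∀ n, AddCommGroup (M n)] [∀ n, AddCommGroup (B n)]
    (dA : ∀ n, A n →+ A (n + 1)) (dM : ∀ n, M n →+ M (n + 1))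
    (dB : ∀ n, B n →+ B (n + 1))
    (g : ∀ n, A n →+ M n) (h : ∀ n, B n →+ M (n + 1))
    (n : ℤ) (x : A (n + 1) × M n × B n) : A (n + 1 + 1) × M (n + 1) × B (n + 1) :=
  (-(dA (n + 1) x.1), g (n + 1) x.1 + dM n x.2.1 + h n x.2.2, dB n x.2.2)

/-- The differential of the mapping cone `Cone(g) = A[1] ⊕ M`:
`d(a,m) = (−d_A a, g(a) + d_M m)`. -/
def coneDiff {A M : ℤ → Type*} [∀ n, AddCommGroup (A n)] [∀ n, AddCommGroup (M n)]
    (dA : ∀ n, A n →+ A (n + 1)) (dM : ∀ n, M n →+ M (n + 1))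
    (g : ∀ n, A n →+ M n) (n : ℤ) (x : A (n + 1) × M n) :
    A (n + 1 + 1) × M (n + 1) :=
  (-(dA (n + 1) x.1), g (n + 1) x.1 + dM n x.2)

/-- The kernel of the projection `π_B : T(M)^f → B`, as an additive subgroup in each
degree. -/
def kerPiB {A M B : ℤ → Type*}
    [∀ n, AddCommGroup (A n)] [∀ n, AddCommGroup (M n)] [∀ n, AddCommGroup (B n)]
    (n : ℤ) : AddSubgroup (A (n + 1) × M n × B n) :=
  ((AddMonoidHom.snd (M n) (B n)).comp
    (AddMonoidHom.snd (A (n + 1)) (M n × B n))).ker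

section Aux

variable {A M B : ℤ → Type*}
    [∀ n, AddCommGroup (A n)] [∀ n, AddCommGroup (M n)] [∀ n, AddCommGroup (B n)]
    (dA : ∀ n, A n →+ A (n + 1)) (dM : ∀ n, M n →+ M (n + 1))
    (dB : ∀ n, B n →+ B (n + 1))
    (g : ∀ n, A n →+ M n) (h : ∀ n, B n →+ M (n + 1))

theorem triGradedDiff_add (n : ℤ) (x y : A (n + 1) × M n × B n) :
    triGradedDiff dA dM dB g h n (x + y) =
      triGradedDiff dA dM dB g h n x + triGradedDiff dA dM dB g h n y := by
  simp only [triGradedDiff, Prod.ext_iff, Prod.fst_add, Prod.snd_add, map_add, map_neg]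
  exact ⟨by abel, by abel, trivial⟩

theorem acyclic_aux
    (hg : ∀ n a, g (n + 1) (dA n a) = dM n (g n a))
    (hgq1 : ∀ (n : ℤ) (m : M (n + 1)), dM (n + 1) m = 0 →
      ∃ a : A (n + 1), dA (n + 1) a = 0 ∧ ∃ m' : M n, m - g (n + 1) a = dM n m')
    (hgq2 : ∀ (n : ℤ) (a : A (n + 1)), dA (n + 1) a = 0 →
      (∃ m' : M n, g (n + 1) a = dM n m') → ∃ a' : A n, a = dA n a') :
    ∀ (n : ℤ) (x : A (n + 1 + 1) × M (n + 1) × B (n + 1)), x.2.2 = 0 →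
        triGradedDiff dA dM dB g h (n + 1) x = 0 →
        ∃ y : A (n + 1) × M n × B n, y.2.2 = 0 ∧ triGradedDiff dA dM dB g h n y = x := by
  intro n x hx hdx
  obtain ⟨a, m, b⟩ := x
  simp only at hx
  subst hx
  simp only [triGradedDiff, Prod.ext_iff, Prod.fst_zero, Prod.snd_zero, map_zero, add_zero] at hdx
  obtain ⟨h1, h2, -⟩ := hdx
  have ha : dA (n + 1 + 1) a = 0 := by
    have := congrArg Neg.neg h1; simpa using this
  -- g (n+1+1) a = dM (n+1) (-m)
  have hga : g (n + 1 + 1) a = dM (n + 1) (-m) := by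
    rw [map_neg]
    linear_combination (norm := abel) h2
  obtain ⟨a'', ha''⟩ := hgq2 (n + 1) a ha ⟨-m, hga⟩
  -- z := m + g (n+1) a'' is closed
  have hz : dM (n + 1) (m + g (n + 1) a'') = 0 := by
    rw [map_add, ← hg (n + 1) a'', ← ha'']
    linear_combination (norm := abel) h2
  obtain ⟨aT, haT, m', hm'⟩ := hgq1 n (m + g (n + 1) a'') hz
  refine ⟨(aT - a'', m', 0), rfl, ?_⟩
  simp only [triGradedDiff, Prod.mk.injEq, map_zero, add_zero, map_sub]
  refine ⟨?_, ?_, trivial⟩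
  · rw [haT, ← ha'']; abel
  · linear_combination (norm := abel) -hm'

end Aux

section Aux2

variable {A M B : ℤ → Type*}
    [∀ n, AddCommGroup (A n)] [∀ n, AddCommGroup (M n)] [∀ n, AddCommGroup (B n)]

theorem mem_kerPiB_iff {n : ℤ} (x : A (n + 1) × M n × B n) :
    x ∈ kerPiB (A := A) (M := M) (B := B) n ↔ x.2.2 = 0 := by
  simp [kerPiB, AddMonoidHom.mem_ker]

/-- The isomorphism `Cone(g)_n ≃ (ker π_B)_n`. -/
def kerEquiv (n : ℤ) : (A (n + 1) × M n) ≃+ kerPiB (A := A) (M := M) (B := B) n where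
  toFun x := ⟨(x.1, x.2, 0), (mem_kerPiB_iff _).mpr rfl⟩
  invFun y := (y.1.1, y.1.2.1)
  left_inv x := rfl
  right_inv y := by
    have h0 : (y : A (n + 1) × M n × B n).2.2 = 0 := (mem_kerPiB_iff _).mp y.2
    apply Subtype.ext
    refine Prod.ext rfl (Prod.ext rfl ?_)
    exact h0.symm
  map_add' x y := by
    apply Subtype.ext
    refine Prod.ext rfl (Prod.ext rfl ?_)
    simp

end Aux2

/-- the kernel of the projection `π_B : T(M)^f → B` is isomorphic, as a
cochain complex, to the mapping cone of the chain map `g = μ^{1|1|0}(−;f;) : A → M`;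
hence if `g` is a quasi-isomorphism, the kernel is acyclic and `π_B` is a
quasi-isomorphism. -/
theorem kernel_of_piB_is_cone_and_piB_quasiIso
    (A M B : ℤ → Type*)
    [∀ n, AddCommGroup (A n)] [∀ n, AddCommGroup (M n)] [∀ n, AddCommGroup (B n)]
    (dA : ∀ n, A n →+ A (n + 1)) (dM : ∀ n, M n →+ M (n + 1))
    (dB : ∀ n, B n →+ B (n + 1))
    (g : ∀ n, A n →+ M n) (h : ∀ n, B n →+ M (n + 1))
    (hdA : ∀ n a, dA (n + 1) (dA n a) = 0) (hdM : ∀ n m, dM (n + 1) (dM n m) = 0)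
    (hdB : ∀ n b, dB (n + 1) (dB n b) = 0)
    (hg : ∀ n a, g (n + 1) (dA n a) = dM n (g n a))
    (hh : ∀ n b, h (n + 1) (dB n b) = -(dM (n + 1) (h n b)))
    (hgq1 : ∀ (n : ℤ) (m : M (n + 1)), dM (n + 1) m = 0 →
      ∃ a : A (n + 1), dA (n + 1) a = 0 ∧ ∃ m' : M n, m - g (n + 1) a = dM n m')
    (hgq2 : ∀ (n : ℤ) (a : A (n + 1)), dA (n + 1) a = 0 →
      (∃ m' : M n, g (n + 1) a = dM n m') → ∃ a' : A n, a = dA n a') :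
    -- the kernel of `π_B` is isomorphic as a cochain complex to `Cone(g)`:
    (∃ e : ∀ n : ℤ, (A (n + 1) × M n) ≃+ (kerPiB (A := A) (M := M) (B := B) n),
      ∀ (n : ℤ) (x : A (n + 1) × M n),
        ((e (n + 1) (coneDiff dA dM g n x) : A (n + 1 + 1) × M (n + 1) × B (n + 1))) =
          triGradedDiff dA dM dB g h n (e n x)) ∧
    -- the kernel is acyclic:
    (∀ (n : ℤ) (x : A (n + 1 + 1) × M (n + 1) × B (n + 1)), x.2.2 = 0 →
        triGradedDiff dA dM dB g h (n + 1) x = 0 →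
        ∃ y : A (n + 1) × M n × B n, y.2.2 = 0 ∧ triGradedDiff dA dM dB g h n y = x) ∧
    -- and `π_B` is a quasi-isomorphism:
    ((∀ (n : ℤ) (b : B (n + 1)), dB (n + 1) b = 0 →
        ∃ x : A (n + 1 + 1) × M (n + 1) × B (n + 1),
          triGradedDiff dA dM dB g h (n + 1) x = 0 ∧ ∃ b' : B n, b - x.2.2 = dB n b') ∧
     (∀ (n : ℤ) (x : A (n + 1 + 1) × M (n + 1) × B (n + 1)),
        triGradedDiff dA dM dB g h (n + 1) x = 0 → (∃ b' : B n, x.2.2 = dB n b') →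
        ∃ x', x = triGradedDiff dA dM dB g h n x')) := by
  
  have acyc := acyclic_aux dA dM dB g h hg hgq1 hgq2
  refine ⟨⟨fun n => kerEquiv n, ?_⟩, acyc, ?_, ?_⟩
  · intro n x
    simp only [kerEquiv, coneDiff, triGradedDiff, AddEquiv.coe_mk, Equiv.coe_fn_mk,
      map_zero, add_zero]
  · -- surjectivity on cohomology
    intro n b hb
    have hclosed : dM (n + 1 + 1) (h (n + 1) b) = 0 := by
      rw [← neg_eq_zero, ← hh (n + 1) b, hb, map_zero]
    obtain ⟨a, ha, m, hm⟩ := hgq1 (n + 1) (h (n + 1) b) hclosed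
    refine ⟨(-a, -m, b), ?_, 0, by simp⟩
    simp only [triGradedDiff, map_neg, Prod.ext_iff, Prod.fst_zero, Prod.snd_zero]
    refine ⟨by simp [ha], ?_, hb⟩
    linear_combination (norm := abel) hm
  · -- injectivity on cohomology
    rintro n x hx ⟨b', hb'⟩
    have hd1 : -(dA (n + 1 + 1) x.1) = 0 := congrArg Prod.fst hx
    have hd2 : g (n + 1 + 1) x.1 + dM (n + 1) x.2.1 + h (n + 1) x.2.2 = 0 :=
      congrArg (fun p => p.2.1) hx
    set z : A (n + 1) × M n × B n := (0, 0, b') with hz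
    have hdz : triGradedDiff dA dM dB g h n z = (0, h n b', dB n b') := by
      simp [triGradedDiff, hz]
    set y : A (n + 1 + 1) × M (n + 1) × B (n + 1) :=
      (x.1, x.2.1 - h n b', 0) with hy
    have hdy : triGradedDiff dA dM dB g h (n + 1) y = 0 := by
      simp only [triGradedDiff, hy, Prod.ext_iff, Prod.fst_zero, Prod.snd_zero,
        map_zero, map_sub, add_zero]
      refine ⟨hd1, ?_, trivial⟩
      have hd3 : dM (n + 1) (h n b') = -(h (n + 1) (dB n b')) :=
        neg_eq_iff_eq_neg.mp (hh n b').symm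
      rw [hd3, ← hb']
      linear_combination (norm := abel) hd2
    obtain ⟨y', hy'0, hy'⟩ := acyc n y rfl hdy
    refine ⟨y' + z, ?_⟩
    rw [triGradedDiff_add, hy', hdz, hy]
    refine Prod.ext ?_ (Prod.ext ?_ ?_) <;> simp [← hb']
end
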